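/- arXiv:1510.07919 — 2 statements merged into one kernel-verified Lean document; each statement's English description precedes it below -/
import Mathlib

section
/- Let N be a near hexagon of order (2,2). Then there is a constant c ∈ {1,2} such that any two points of N at distance 2 from each other have exactly c common neighbors. -/
/-- The collinearity graph of a point-line geometry whose lines are given as
sets of points: two points are adjacent when they are distinct and lie on a
common line. -/
def collGraph {P : Type*} (Lines : Set (Set P)) : SimpleGraph P where
  Adj x y := x ≠ y ∧ ∃ L ∈ Lines, x ∈ L ∧ y ∈ L
  symm := by
    constructor
    rintro x y ⟨hxy, L, hL, hx, hy⟩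
    exact ⟨hxy.symm, L, hL, hy, hx⟩
  loopless := by
    constructor
    rintro x ⟨h, -⟩
    exact h rfl

/-- A near `2d`-gon: a partial linear space (every line carries at least two
points, two distinct points lie on at most one common line) whose collinearity
graph is connected of diameter `d`, and in which for every point `x` and every
line `L` there is a unique point of `L` nearest to `x`.  A near hexagon is a
`NearPolygon P 3`, a near octagon is a `NearPolygon P 4`. -/
structure NearPolygon (P : Type*) (d : ℕ) where
  Lines : Set (Set P)
  two_pts : ∀ L ∈ Lines, ∃ x ∈ L, ∃ y ∈ L, x ≠ y
  unique_line : ∀ L₁ ∈ Lines, ∀ L₂ ∈ Lines, ∀ x y : P,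
    x ≠ y → x ∈ L₁ → y ∈ L₁ → x ∈ L₂ → y ∈ L₂ → L₁ = L₂
  connected : (collGraph Lines).Connected
  diam_le : ∀ x y : P, (collGraph Lines).dist x y ≤ d
  diam_eq : ∃ x y : P, (collGraph Lines).dist x y = d
  near : ∀ (x : P), ∀ L ∈ Lines, ∃! y, y ∈ L ∧
    ∀ z ∈ L, (collGraph Lines).dist x y ≤ (collGraph Lines).dist x z

/-- A near polygon has order `(s,t)` if every line is incident with exactly
`s+1` points and every point is incident with exactly `t+1` lines. -/
def NearPolygon.hasOrder {P : Type*} {d : ℕ} (N : NearPolygon P d) (s t : ℕ) : Prop :=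
  (∀ L ∈ N.Lines, L.ncard = s + 1) ∧
  (∀ x : P, {L | L ∈ N.Lines ∧ x ∈ L}.ncard = t + 1)

/-- A semi-valuation: every line `L` contains a unique point `xL` such that
every other point of `L` has value `f xL + 1`. -/
def IsSemiValuation {P : Type*} (Lines : Set (Set P)) (f : P → ℤ) : Prop :=
  ∀ L ∈ Lines, ∃! xL, xL ∈ L ∧ ∀ x ∈ L, x ≠ xL → f x = f xL + 1

/-- A valuation: a semi-valuation whose minimum value is `0`. -/
def IsValuation {P : Type*} (Lines : Set (Set P)) (f : P → ℤ) : Prop :=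
  IsSemiValuation Lines f ∧ (∀ x, 0 ≤ f x) ∧ (∃ x, f x = 0)

/-- `ι` realizes the geometry with lines `LQ` as a full isometrically embedded
subgeometry of the geometry with lines `LP` (lines being identified with their
point sets, fullness amounts to lines mapping onto lines). -/
structure IsFullIsomEmb {Q P : Type*} (LQ : Set (Set Q)) (LP : Set (Set P))
    (ι : Q → P) : Prop where
  inj : Function.Injective ι
  line_map : ∀ L ∈ LQ, ι '' L ∈ LP
  isometric : ∀ x y : Q, (collGraph LP).dist (ι x) (ι y) = (collGraph LQ).dist x y

/-- The distance `d(x, P)` from a point `x` of the ambient geometry to the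
point set of the embedded subgeometry. -/
noncomputable def distToSub {Q P : Type*} (LP : Set (Set P)) (ι : Q → P) (x : P) : ℕ :=
  sInf (Set.range fun z : Q => (collGraph LP).dist x (ι z))

/-- The function `f_x : y ↦ d(x, y) - d(x, P)` induced on the embedded
subgeometry by a point `x` of the ambient geometry. -/
noncomputable def inducedVal {Q P : Type*} (LP : Set (Set P)) (ι : Q → P) (x : P) :
    Q → ℤ :=
  fun y => ((collGraph LP).dist x (ι y) : ℤ) - (distToSub LP ι x : ℤ)

/-- Two valuations are neighboring if `|f1 x - f2 x + ε| ≤ 1` for all `x`,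
for some integer `ε`. -/
def Neighboring {P : Type*} (f1 f2 : P → ℤ) : Prop :=
  ∃ ε : ℤ, ∀ x, |f1 x - f2 x + ε| ≤ 1

/-- The semi-valuation `f3'` built from two neighboring valuations `f1, f2`
and a compatible `ε`. -/
def starFun {P : Type*} (f1 f2 : P → ℤ) (ε : ℤ) (x : P) : ℤ :=
  if f1 x = f2 x - ε then f1 x - 1 else max (f1 x) (f2 x - ε)

/-- `StarRel f1 f2 f3` expresses `f1 * f2 = f3`: some `ε ∈ {-1,0,1}` witnesses
that `f1` and `f2` are neighboring, and, for every such `ε`, subtracting the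
minimum value `m` of `f3' = starFun f1 f2 ε` from `f3'` yields `f3`. -/
def StarRel {P : Type*} (f1 f2 f3 : P → ℤ) : Prop :=
  (∃ ε ∈ ({-1, 0, 1} : Set ℤ), ∀ x, |f1 x - f2 x + ε| ≤ 1) ∧
  ∀ ε ∈ ({-1, 0, 1} : Set ℤ), (∀ x, |f1 x - f2 x + ε| ≤ 1) →
    ∃ m : ℤ, IsLeast (Set.range (starFun f1 f2 ε)) m ∧
      ∀ x, f3 x = starFun f1 f2 ε x - m

/-- A subspace: together with two distinct collinear points it contains every
line through them. -/
def IsSubspace {P : Type*} (Lines : Set (Set P)) (X : Set P) : Prop :=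
  ∀ L ∈ Lines, ∀ x ∈ L, ∀ y ∈ L, x ≠ y → x ∈ X → y ∈ X → L ⊆ X

/-- A convex subspace: a subspace containing every point on a shortest path
between any two of its points. -/
def IsConvexSubspace {P : Type*} (Lines : Set (Set P)) (X : Set P) : Prop :=
  IsSubspace Lines X ∧
  ∀ x ∈ X, ∀ y ∈ X, ∀ z : P,
    (collGraph Lines).dist x z + (collGraph Lines).dist z y
      = (collGraph Lines).dist x y → z ∈ X

/-- A quad: a convex subspace of diameter `2` inducing (with the lines fully
contained in it) a nondegenerate generalized quadrangle. -/
def IsQuad {P : Type*} (Lines : Set (Set P)) (Q : Set P) : Prop :=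
  IsConvexSubspace Lines Q ∧
  (∀ x ∈ Q, ∀ y ∈ Q, (collGraph Lines).dist x y ≤ 2) ∧
  (∃ x ∈ Q, ∃ y ∈ Q, (collGraph Lines).dist x y = 2) ∧
  (∀ x ∈ Q, ∀ L ∈ Lines, L ⊆ Q → x ∉ L →
    ∃! y, y ∈ L ∧ (collGraph Lines).Adj x y) ∧
  (∀ x ∈ Q, ∃ L₁ ∈ Lines, ∃ L₂ ∈ Lines,
    L₁ ⊆ Q ∧ L₂ ⊆ Q ∧ x ∈ L₁ ∧ x ∈ L₂ ∧ L₁ ≠ L₂) ∧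
  (∃ x ∈ Q, ∃ y ∈ Q, x ≠ y ∧ ¬ (collGraph Lines).Adj x y)

/-- A quad has order `(s,t')` if each of its lines has `s+1` points and each
of its points is on exactly `t'+1` lines contained in the quad. -/
def QuadHasOrder {P : Type*} (Lines : Set (Set P)) (Q : Set P) (s t' : ℕ) : Prop :=
  (∀ L ∈ Lines, L ⊆ Q → L.ncard = s + 1) ∧
  (∀ x ∈ Q, {L | L ∈ Lines ∧ L ⊆ Q ∧ x ∈ L}.ncard = t' + 1)


/-!
Write `μ(x, y)` for the number of common neighbours of two points at distance 2. By the
nearest-point property, each of the three lines through a point `z` either has both its other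
points one step farther from `x` than `z`, or one point closer and one equally far. So a point
`y ∈ Γ₂(x)` has `6 - 2 μ(x, y)` neighbours in `Γ₃(x)`, and counting the edges between consecutive
spheres `Γᵢ(x)` gives `∑_{y ∈ Γ₂(x)} μ(x, y) = 24` and `9 |Γ₂(x)| = 3 |P| + 27`; in particular
`|Γ₂(x)|` does not depend on `x`.

`μ ≥ 3` never occurs: if `μ(x, y) ≥ 3`, the property `μ(x, ·) ≥ 3` spreads along the lines of
the geometry to all of `Γ₂(x)`, and such points have no neighbour in `Γ₃(x)`. Hence
`Γ₃(x) = ∅`, so `|Γ₂(x)| = 8` and `|P| = 15`; but then `Γ₃(u) = ∅` for every `u`, contradicting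
diameter 3.

Two points with `μ = 2` lie in a unique `3 × 3` grid. If `g(x)` grids pass through `x`, exactly
`4 g(x)` points of `Γ₂(x)` have `μ = 2`; so `g` is constant, and counting the incidences between
points and grids gives `|P| g = 9 #grids` with `|P| = 63 - 12 g`. Only `g = 0` (`μ ≡ 1`) and
`g = 3` (`μ ≡ 2`) are possible.
-/

theorem exists_perm_fin_three {i i' : Fin 3} (h : i ≠ i') :
    ∃ σ : Equiv.Perm (Fin 3), σ 0 = i ∧ σ 1 = i' := by
  revert i i'; decide

theorem injective_vecCons_three {α : Type*} {a b c : α} (hab : a ≠ b) (hac : a ≠ c)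
    (hbc : b ≠ c) : Function.Injective ![a, b, c] := by
  intro i j h
  fin_cases i <;> fin_cases j <;> simp_all [eq_comm]

namespace NearPolygon

open SimpleGraph Function

variable {P : Type*}

noncomputable def mu {d : ℕ} (N : NearPolygon P d) (x y : P) : ℕ :=
  ((collGraph N.Lines).commonNeighbors x y).ncard

section Basic

open Set

variable {d : ℕ} {N : NearPolygon P d} {L K : Set P} {a x y z w : P}

theorem adj_of_mem (hL : L ∈ N.Lines) (hx : x ∈ L) (hy : y ∈ L) (hxy : x ≠ y) :
    (collGraph N.Lines).Adj x y :=
  ⟨hxy, L, hL, hx, hy⟩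

theorem dist_le_one_of_mem (hL : L ∈ N.Lines) (hx : x ∈ L) (hy : y ∈ L) :
    (collGraph N.Lines).dist x y ≤ 1 := by
  rcases eq_or_ne x y with rfl | hxy
  · simp
  · exact (dist_eq_one_iff_adj.mpr (adj_of_mem hL hx hy hxy)).le

theorem notMem_of_dist_eq_two (hL : L ∈ N.Lines) (hy : y ∈ L)
    (h : (collGraph N.Lines).dist x y = 2) : x ∉ L := fun hx => by
  have := dist_le_one_of_mem hL hx hy
  omega

theorem exists_nearest (x : P) (hL : L ∈ N.Lines) :
    ∃ m ∈ L, ∀ p ∈ L, p ≠ m →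
      (collGraph N.Lines).dist x p = (collGraph N.Lines).dist x m + 1 := by
  obtain ⟨m, ⟨hm, hmin⟩, huniq⟩ := N.near x L hL
  refine ⟨m, hm, fun p hp hpm => ?_⟩
  have hle : (collGraph N.Lines).dist x p ≤ (collGraph N.Lines).dist x m + 1 := by
    have := N.connected.dist_triangle (u := x) (v := m) (w := p)
    rwa [dist_eq_one_iff_adj.mpr (adj_of_mem hL hm hp hpm.symm)] at this
  have hne : (collGraph N.Lines).dist x p ≠ (collGraph N.Lines).dist x m :=
    fun h => hpm (huniq p ⟨hp, fun q hq => h ▸ hmin q hq⟩)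
  have := hmin p hp
  omega

theorem mem_of_adj_of_adj (hL : L ∈ N.Lines) (hx : x ∈ L) (hy : y ∈ L) (hxy : x ≠ y)
    (hzx : (collGraph N.Lines).Adj z x) (hzy : (collGraph N.Lines).Adj z y) : z ∈ L := by
  by_contra hz
  obtain ⟨m, hm, hpat⟩ := exists_nearest z hL
  have hzm : (collGraph N.Lines).dist z m ≠ 0 := fun h =>
    hz (N.connected.dist_eq_zero_iff.mp h ▸ hm)
  have hx' : x = m := by
    by_contra h
    have := hpat x hx h
    rw [dist_eq_one_iff_adj.mpr hzx] at this
    omega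
  have hy' : y = m := by
    by_contra h
    have := hpat y hy h
    rw [dist_eq_one_iff_adj.mpr hzy] at this
    omega
  exact hxy (hx'.trans hy'.symm)

theorem dist_eq_two_of_adj_of_adj (hxy : x ≠ y) (hna : ¬(collGraph N.Lines).Adj x y)
    (hxz : (collGraph N.Lines).Adj x z) (hzy : (collGraph N.Lines).Adj z y) :
    (collGraph N.Lines).dist x y = 2 := by
  have hle := N.connected.dist_triangle (u := x) (v := z) (w := y)
  rw [dist_eq_one_iff_adj.mpr hxz, dist_eq_one_iff_adj.mpr hzy] at hle
  have h0 : (collGraph N.Lines).dist x y ≠ 0 := fun h => hxy (N.connected.dist_eq_zero_iff.mp h)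
  have h1 : (collGraph N.Lines).dist x y ≠ 1 := fun h => hna (dist_eq_one_iff_adj.mp h)
  omega

theorem dist_eq_two_of_adj_of_notMem (hL : L ∈ N.Lines) (hy : y ∈ L) (hw : w ∈ L)
    (hyw : y ≠ w) (hxy : (collGraph N.Lines).Adj x y) (hx : x ∉ L) :
    (collGraph N.Lines).dist x w = 2 :=
  dist_eq_two_of_adj_of_adj (fun h => hx (h ▸ hw))
    (fun hxw => hx (mem_of_adj_of_adj hL hy hw hyw hxy hxw)) hxy (adj_of_mem hL hy hw hyw)

theorem exists_adj_dist_eq {k : ℕ} (h : (collGraph N.Lines).dist x y = k + 1) :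
    ∃ z, (collGraph N.Lines).Adj x z ∧ (collGraph N.Lines).dist z y = k := by
  obtain ⟨p, hp⟩ := (N.connected.preconnected x y).exists_walk_length_eq_dist
  cases p with
  | nil => simp at h
  | @cons _ z _ hxz q =>
    refine ⟨z, hxz, le_antisymm ?_ ?_⟩
    · have := dist_le q
      simp only [Walk.length_cons] at hp
      omega
    · have := N.connected.dist_triangle (u := x) (v := z) (w := y)
      rw [dist_eq_one_iff_adj.mpr hxz] at this
      omega

theorem mu_comm (x y : P) : N.mu x y = N.mu y x := by
  rw [mu, mu, commonNeighbors_symm]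

theorem one_le_mu [Finite P] (hxy : (collGraph N.Lines).dist x y = 2) : 1 ≤ N.mu x y := by
  obtain ⟨z, hxz, hzy⟩ := exists_adj_dist_eq (k := 1) hxy
  exact (ncard_pos).mpr ⟨z, hxz, (dist_eq_one_iff_adj.mp hzy).symm⟩

theorem not_adj_of_mem_commonNeighbors (hxy : (collGraph N.Lines).dist x y = 2)
    (hz : z ∈ (collGraph N.Lines).commonNeighbors x y)
    (hw : w ∈ (collGraph N.Lines).commonNeighbors x y) (hzw : z ≠ w) :
    ¬(collGraph N.Lines).Adj z w := by
  rintro ⟨-, L, hL, hzL, hwL⟩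
  rw [mem_commonNeighbors] at hz hw
  have hx := mem_of_adj_of_adj hL hzL hwL hzw hz.1 hw.1
  have hy := mem_of_adj_of_adj hL hzL hwL hzw hz.2 hw.2
  have := dist_le_one_of_mem hL hx hy
  omega

theorem dist_eq_two_of_mem_commonNeighbors (hxy : (collGraph N.Lines).dist x y = 2)
    (hz : z ∈ (collGraph N.Lines).commonNeighbors x y)
    (hw : w ∈ (collGraph N.Lines).commonNeighbors x y) (hzw : z ≠ w) (hL : L ∈ N.Lines)
    (hxL : x ∈ L) (hzL : z ∈ L) (haL : a ∈ L) (hax : a ≠ x) (haz : a ≠ z) :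
    (collGraph N.Lines).dist y a = 2 ∧ (collGraph N.Lines).dist w a = 2 := by
  have hwz : (collGraph N.Lines).dist w z = 2 := dist_eq_two_of_adj_of_adj hzw.symm
    (not_adj_of_mem_commonNeighbors hxy hw hz hzw.symm) hw.1.symm hz.1
  exact ⟨dist_eq_two_of_adj_of_notMem hL hzL haL haz.symm hz.2
      (notMem_of_dist_eq_two hL hxL (dist_comm.trans hxy)),
    dist_eq_two_of_adj_of_notMem hL hxL haL hax.symm hw.1.symm (notMem_of_dist_eq_two hL hzL hwz)⟩

theorem disjoint_of_parallel (hL : L ∈ N.Lines) (hK : K ∈ N.Lines) {u₁ u₂ v₁ v₂ : P}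
    (hu₁ : u₁ ∈ L) (hu₂ : u₂ ∈ L) (hv₁ : v₁ ∈ K) (hv₂ : v₂ ∈ K)
    (h₁ : (collGraph N.Lines).Adj u₁ v₁) (h₁₂ : (collGraph N.Lines).dist u₁ v₂ = 2)
    (h₂₁ : (collGraph N.Lines).dist u₂ v₁ = 2) : Disjoint L K := by
  rw [Set.disjoint_left]
  intro q hqL hqK
  have hqu₁ : q ≠ u₁ := by rintro rfl; exact notMem_of_dist_eq_two hK hv₂ h₁₂ hqK
  have hqv₁ : q ≠ v₁ := by
    rintro rfl; exact notMem_of_dist_eq_two hL hu₂ (dist_comm.trans h₂₁) hqL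
  exact notMem_of_dist_eq_two hK hv₂ h₁₂
    (mem_of_adj_of_adj hK hqK hv₁ hqv₁ (adj_of_mem hL hu₁ hqL hqu₁.symm) h₁)

theorem exists_adj_notMem {s t : ℕ} (hord : N.hasOrder s t) (ht : t ≠ 0) (hK : K ∈ N.Lines)
    (ha : a ∈ K) : ∃ c, (collGraph N.Lines).Adj a c ∧ c ∉ K := by
  obtain ⟨K', ⟨hK', haK'⟩, hK'K⟩ := exists_ne_of_one_lt_ncard (by rw [hord.2 a]; omega) K
  obtain ⟨c, hcK', hca⟩ : ∃ c ∈ K', c ≠ a := by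
    obtain ⟨p, hp, q, hq, hpq⟩ := N.two_pts K' hK'
    rcases eq_or_ne p a with rfl | h
    exacts [⟨q, hq, hpq.symm⟩, ⟨p, hp, h⟩]
  exact ⟨c, adj_of_mem hK' haK' hcK' hca.symm,
    fun hcK => hK'K (N.unique_line K' hK' K hK a c hca.symm haK' hcK' ha hcK)⟩

end Basic

section ThreePointLines

open Set

variable {d : ℕ} {N : NearPolygon P d} {L M : Set P} {x y z u v w : P}

theorem exists_eq_insert_insert (h3 : ∀ L ∈ N.Lines, L.ncard = 3) (hL : L ∈ N.Lines)
    (hx : x ∈ L) (hy : y ∈ L) (hxy : x ≠ y) : ∃ r, r ≠ x ∧ r ≠ y ∧ L = {x, y, r} := by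
  have hpair : ({x, y} : Set P) ⊆ L := insert_subset hx (singleton_subset_iff.mpr hy)
  obtain ⟨r, hr⟩ := ncard_eq_one.mp <| by
    rw [ncard_sdiff hpair, h3 L hL, ncard_pair hxy]
  have hrL : r ∈ L \ {x, y} := hr ▸ mem_singleton r
  simp only [mem_sdiff, mem_insert_iff, mem_singleton_iff, not_or] at hrL
  refine ⟨r, hrL.2.1, hrL.2.2, ?_⟩
  rw [← sdiff_union_of_subset hpair, hr]
  ext; simp only [mem_union, mem_insert_iff, mem_singleton_iff]; tauto

theorem exists_eq_insert_insert_of_mem (h3 : ∀ L ∈ N.Lines, L.ncard = 3) (hL : L ∈ N.Lines)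
    (hz : z ∈ L) : ∃ u v, u ≠ v ∧ u ≠ z ∧ v ≠ z ∧ L = {z, u, v} := by
  obtain ⟨a, ha, b, hb, hab⟩ := N.two_pts L hL
  obtain ⟨u, hu, huz⟩ : ∃ u ∈ L, u ≠ z := by
    rcases eq_or_ne a z with rfl | h
    exacts [⟨b, hb, hab.symm⟩, ⟨a, ha, h⟩]
  obtain ⟨v, hvz, hvu, rfl⟩ := exists_eq_insert_insert h3 hL hz hu huz.symm
  exact ⟨u, v, hvu.symm, huz, hvz, rfl⟩

theorem eq_of_mem_of_ne (h3 : ∀ L ∈ N.Lines, L.ncard = 3) (hL : L ∈ N.Lines)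
    (hx : x ∈ L) (hy : y ∈ L) (hz : z ∈ L) (hw : w ∈ L) (hxy : x ≠ y)
    (hzx : z ≠ x) (hzy : z ≠ y) (hwx : w ≠ x) (hwy : w ≠ y) : z = w := by
  obtain ⟨r, -, -, rfl⟩ := exists_eq_insert_insert h3 hL hx hy hxy
  simp only [mem_insert_iff, mem_singleton_iff] at hz hw
  grind

theorem dist_cases_of_mem (h3 : ∀ L ∈ N.Lines, L.ncard = 3) (hL : L ∈ N.Lines)
    (hu : u ∈ L) (hv : v ∈ L) (hw : w ∈ L) (huv : u ≠ v) (huw : u ≠ w) (hvw : v ≠ w) (q : P) :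
    let δ := (collGraph N.Lines).dist q
    (δ v = δ u + 1 ∧ δ w = δ u + 1) ∨ (δ u = δ v + 1 ∧ δ w = δ v + 1) ∨
      (δ u = δ w + 1 ∧ δ v = δ w + 1) := by
  obtain ⟨m, hm, hpat⟩ := exists_nearest q hL
  have hm' : m = u ∨ m = v ∨ m = w := by
    obtain ⟨r, -, -, rfl⟩ := exists_eq_insert_insert h3 hL hu hv huv
    simp only [mem_insert_iff, mem_singleton_iff] at hm hw
    grind
  rcases hm' with rfl | rfl | rfl
  · exact .inl ⟨hpat v hv huv.symm, hpat w hw huw.symm⟩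
  · exact .inr (.inl ⟨hpat u hu huv, hpat w hw hvw.symm⟩)
  · exact .inr (.inr ⟨hpat u hu huw, hpat v hv hvw⟩)

theorem adj_of_parallel (h3 : ∀ L ∈ N.Lines, L.ncard = 3) (hL : L ∈ N.Lines)
    (hM : M ∈ N.Lines) {u₁ u₂ u₃ v₁ v₂ v₃ : P} (hu₁ : u₁ ∈ L) (hu₂ : u₂ ∈ L) (hu₃ : u₃ ∈ L)
    (hv₁ : v₁ ∈ M) (hv₂ : v₂ ∈ M) (hv₃ : v₃ ∈ M) (hu₃₁ : u₃ ≠ u₁) (hu₃₂ : u₃ ≠ u₂)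
    (hv₃₁ : v₃ ≠ v₁) (hv₃₂ : v₃ ≠ v₂) (h₁ : (collGraph N.Lines).Adj u₁ v₁)
    (h₂ : (collGraph N.Lines).Adj u₂ v₂) (h₁₂ : (collGraph N.Lines).dist u₁ v₂ = 2)
    (h₂₁ : (collGraph N.Lines).dist u₂ v₁ = 2) : (collGraph N.Lines).Adj u₃ v₃ := by
  have hu₁₂ : u₁ ≠ u₂ := by rintro rfl; rw [dist_eq_one_iff_adj.mpr h₁] at h₂₁; omega
  have hv₁₂ : v₁ ≠ v₂ := by rintro rfl; rw [dist_eq_one_iff_adj.mpr h₁] at h₁₂; omega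
  have d₁ := dist_eq_one_iff_adj.mpr h₁.symm
  have d₂ := dist_eq_one_iff_adj.mpr h₂.symm
  rw [dist_comm] at h₁₂ h₂₁
  have h₃₁ : (collGraph N.Lines).dist v₁ u₃ = 2 := by
    rcases dist_cases_of_mem h3 hL hu₁ hu₂ hu₃ hu₁₂ hu₃₁.symm hu₃₂.symm v₁ with h | h | h <;> omega
  have h₃₂ : (collGraph N.Lines).dist v₂ u₃ = 2 := by
    rcases dist_cases_of_mem h3 hL hu₁ hu₂ hu₃ hu₁₂ hu₃₁.symm hu₃₂.symm v₂ with h | h | h <;> omega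
  rw [dist_comm] at h₃₁ h₃₂
  rw [← dist_eq_one_iff_adj]
  rcases dist_cases_of_mem h3 hM hv₁ hv₂ hv₃ hv₁₂ hv₃₁.symm hv₃₂.symm u₃ with h | h | h <;> omega

end ThreePointLines

structure IsGrid {d : ℕ} (N : NearPolygon P d) (p : Fin 3 → Fin 3 → P) : Prop where
  injective : Function.Injective (Function.uncurry p)
  row : ∀ i, ∃ L ∈ N.Lines, ∀ j, p i j ∈ L
  col : ∀ j, ∃ L ∈ N.Lines, ∀ i, p i j ∈ L

namespace IsGrid

variable {d : ℕ} {N : NearPolygon P d} {p q : Fin 3 → Fin 3 → P} {i i' j j' : Fin 3}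

theorem eq_iff (hp : N.IsGrid p) : p i j = p i' j' ↔ i = i' ∧ j = j' :=
  ⟨fun h => Prod.ext_iff.mp (hp.injective (a₁ := (i, j)) (a₂ := (i', j')) h),
    fun ⟨hi, hj⟩ => hi ▸ hj ▸ rfl⟩

theorem adj_row (hp : N.IsGrid p) (hj : j ≠ j') : (collGraph N.Lines).Adj (p i j) (p i j') :=
  have ⟨_, hL, hmem⟩ := hp.row i
  adj_of_mem hL (hmem j) (hmem j') fun h => hj (hp.eq_iff.mp h).2

theorem adj_col (hp : N.IsGrid p) (hi : i ≠ i') : (collGraph N.Lines).Adj (p i j) (p i' j) :=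
  have ⟨_, hL, hmem⟩ := hp.col j
  adj_of_mem hL (hmem i) (hmem i') fun h => hi (hp.eq_iff.mp h).1

theorem not_adj (h3 : ∀ L ∈ N.Lines, L.ncard = 3) (hp : N.IsGrid p) (hi : i ≠ i')
    (hj : j ≠ j') : ¬(collGraph N.Lines).Adj (p i j) (p i' j') := by
  rintro ⟨hne, K, hK, hijK, hijK'⟩
  have h₁ : p i j' ∈ K := mem_of_adj_of_adj hK hijK hijK' hne (hp.adj_row hj.symm)
    (hp.adj_col hi)
  have h₂ : p i' j ∈ K := mem_of_adj_of_adj hK hijK hijK' hne (hp.adj_col hi.symm)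
    (hp.adj_row hj)
  have hi' : ∀ {k k'}, p i' k ≠ p i k' := fun h => hi (hp.eq_iff.mp h).1.symm
  exact hj (hp.eq_iff.mp (eq_of_mem_of_ne h3 hK hijK h₁ hijK' h₂
    (fun h => hj (hp.eq_iff.mp h).2) hi' hi' hi' hi')).2.symm

theorem dist_eq_two (h3 : ∀ L ∈ N.Lines, L.ncard = 3) (hp : N.IsGrid p) (hi : i ≠ i')
    (hj : j ≠ j') : (collGraph N.Lines).dist (p i j) (p i' j') = 2 :=
  dist_eq_two_of_adj_of_adj (by simp [hp.eq_iff, hi]) (hp.not_adj h3 hi hj) (hp.adj_row hj)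
    (hp.adj_col hi)

theorem ne_of_dist_eq_two (hp : N.IsGrid p) {i i' j j' : Fin 3}
    (h : (collGraph N.Lines).dist (p i j) (p i' j') = 2) : i ≠ i' ∧ j ≠ j' := by
  constructor <;> rintro rfl
  · rcases eq_or_ne j j' with rfl | hj
    · simp at h
    · rw [dist_eq_one_iff_adj.mpr (hp.adj_row hj)] at h; omega
  · rw [dist_eq_one_iff_adj.mpr (hp.adj_col fun hi => by simp [hi] at h)] at h; omega

theorem reindex (hp : N.IsGrid p) (σ τ : Equiv.Perm (Fin 3)) :
    N.IsGrid fun i j => p (σ i) (τ j) where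
  injective _ _ h := by
    obtain ⟨hi, hj⟩ := hp.eq_iff.mp h
    exact Prod.ext (σ.injective hi) (τ.injective hj)
  row i := have ⟨L, hL, hmem⟩ := hp.row (σ i); ⟨L, hL, fun j => hmem (τ j)⟩
  col j := have ⟨L, hL, hmem⟩ := hp.col (τ j); ⟨L, hL, fun i => hmem (σ i)⟩

theorem transpose (hp : N.IsGrid p) : N.IsGrid fun i j => p j i where
  injective _ _ h := by
    obtain ⟨hi, hj⟩ := hp.eq_iff.mp h
    exact Prod.ext hj hi
  row := hp.col
  col := hp.row

theorem eq_of_row (h3 : ∀ L ∈ N.Lines, L.ncard = 3) (hp : N.IsGrid p) (hq : N.IsGrid q)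
    {j'' : Fin 3} (hj : j ≠ j') (hj₁ : j'' ≠ j) (hj₂ : j'' ≠ j') (e : p i j = q i j)
    (e' : p i j' = q i j') : p i j'' = q i j'' := by
  obtain ⟨L, hL, hpL⟩ := hp.row i
  obtain ⟨L', hL', hqL'⟩ := hq.row i
  have hne : p i j ≠ p i j' := fun h => hj (hp.eq_iff.mp h).2
  obtain rfl := N.unique_line L hL L' hL' _ _ hne (hpL j) (hpL j') (e ▸ hqL' j) (e' ▸ hqL' j')
  exact eq_of_mem_of_ne h3 hL (hpL j) (hpL j') (hpL j'') (hqL' j'') hne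
    (fun h => hj₁ (hp.eq_iff.mp h).2) (fun h => hj₂ (hp.eq_iff.mp h).2)
    (fun h => hj₁ (hq.eq_iff.mp (h.trans e)).2) (fun h => hj₂ (hq.eq_iff.mp (h.trans e')).2)

theorem eq_of_col (h3 : ∀ L ∈ N.Lines, L.ncard = 3) (hp : N.IsGrid p) (hq : N.IsGrid q)
    {i'' : Fin 3} (hi : i ≠ i') (hi₁ : i'' ≠ i) (hi₂ : i'' ≠ i') (e : p i j = q i j)
    (e' : p i' j = q i' j) : p i'' j = q i'' j :=
  eq_of_row (p := fun i j => p j i) (q := fun i j => q j i) h3 hp.transpose hq.transpose hi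
    hi₁ hi₂ e e'

theorem eq_of_eq (h3 : ∀ L ∈ N.Lines, L.ncard = 3) (hp : N.IsGrid p) (hq : N.IsGrid q)
    (e₀₀ : p 0 0 = q 0 0) (e₀₁ : p 0 1 = q 0 1) (e₁₀ : p 1 0 = q 1 0) (e₁₁ : p 1 1 = q 1 1) :
    p = q := by
  have e₀₂ := eq_of_row h3 hp hq (j'' := 2) (by decide) (by decide) (by decide) e₀₀ e₀₁
  have e₁₂ := eq_of_row h3 hp hq (j'' := 2) (by decide) (by decide) (by decide) e₁₀ e₁₁
  have e₂₀ := eq_of_col h3 hp hq (i'' := 2) (by decide) (by decide) (by decide) e₀₀ e₁₀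
  have e₂₁ := eq_of_col h3 hp hq (i'' := 2) (by decide) (by decide) (by decide) e₀₁ e₁₁
  have e₂₂ := eq_of_row h3 hp hq (j'' := 2) (by decide) (by decide) (by decide) e₂₀ e₂₁
  ext i j
  fin_cases i <;> fin_cases j <;> assumption

end IsGrid

section GridConstruction

open Set

variable {d : ℕ} {N : NearPolygon P d} {x y z₁ z₂ : P}

theorem isGrid_of_pairwise_disjoint {p : Fin 3 → Fin 3 → P} (R : Fin 3 → Set P)
    (hR : ∀ i, R i ∈ N.Lines) (hpR : ∀ i j, p i j ∈ R i) (hdisj : Pairwise (Disjoint on R))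
    (hinj : ∀ i, Function.Injective (p i)) (hcol : ∀ j, ∃ L ∈ N.Lines, ∀ i, p i j ∈ L) :
    N.IsGrid p where
  injective := by
    rintro ⟨i, j⟩ ⟨i', j'⟩ h
    obtain rfl : i = i' := by
      by_contra hi
      exact Set.disjoint_left.mp (hdisj hi) (hpR i j) ((show p i j = p i' j' from h) ▸ hpR i' j')
    exact Prod.ext rfl (hinj i h)
  row i := ⟨R i, hR i, hpR i⟩
  col := hcol

-- The third points `w k` of the columns `u k v k` form the third row, because any two columns
-- are again parallel.
theorem exists_isGrid_of_parallel (h3 : ∀ L ∈ N.Lines, L.ncard = 3) {u v : Fin 3 → P}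
    (hu : ∃ L ∈ N.Lines, ∀ k, u k ∈ L) (hv : ∃ L ∈ N.Lines, ∀ k, v k ∈ L)
    (huinj : Injective u) (hadj : ∀ k, (collGraph N.Lines).Adj (u k) (v k))
    (hdist : ∀ k l, k ≠ l → (collGraph N.Lines).dist (u k) (v l) = 2) :
    ∃ w, N.IsGrid ![u, v, w] := by
  have hcol : ∀ k, ∃ C ∈ N.Lines, ∃ w, u k ∈ C ∧ v k ∈ C ∧ w ∈ C ∧ w ≠ u k ∧ w ≠ v k := by
    intro k
    obtain ⟨C, hC, huC, hvC⟩ := (hadj k).2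
    obtain ⟨w, hwu, hwv, rfl⟩ := exists_eq_insert_insert h3 hC huC hvC (hadj k).ne
    exact ⟨_, hC, w, by simp, by simp, by simp, hwu, hwv⟩
  choose C hC w huC hvC hwC hwu hwv using hcol
  obtain ⟨R₀, hR₀, huR₀⟩ := hu
  obtain ⟨R₁, hR₁, hvR₁⟩ := hv
  have hvu : ∀ k l, k ≠ l → (collGraph N.Lines).dist (v k) (u l) = 2 :=
    fun k l hkl => dist_comm.trans (hdist l k hkl.symm)
  have hvinj : Injective v := fun k l h => by
    by_contra hkl
    have := hdist k l hkl
    rw [← h, dist_eq_one_iff_adj.mpr (hadj k)] at this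
    omega
  have huw : ∀ k l, k ≠ l → (collGraph N.Lines).dist (u k) (w l) = 2 := fun k l hkl =>
    dist_eq_two_of_adj_of_notMem (hC l) (huC l) (hwC l) (hwu l).symm
      (adj_of_mem hR₀ (huR₀ k) (huR₀ l) (huinj.ne hkl))
      (notMem_of_dist_eq_two (hC l) (hvC l) (hdist k l hkl))
  have hvw : ∀ k l, k ≠ l → (collGraph N.Lines).dist (v k) (w l) = 2 := fun k l hkl =>
    dist_eq_two_of_adj_of_notMem (hC l) (hvC l) (hwC l) (hwv l).symm
      (adj_of_mem hR₁ (hvR₁ k) (hvR₁ l) (hvinj.ne hkl))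
      (notMem_of_dist_eq_two (hC l) (huC l) (hvu k l hkl))
  have hww : ∀ k l, k ≠ l → (collGraph N.Lines).Adj (w k) (w l) := fun k l hkl =>
    adj_of_parallel h3 (hC k) (hC l) (huC k) (hvC k) (hwC k) (huC l) (hvC l) (hwC l) (hwu k)
      (hwv k) (hwu l) (hwv l) (adj_of_mem hR₀ (huR₀ k) (huR₀ l) (huinj.ne hkl))
      (adj_of_mem hR₁ (hvR₁ k) (hvR₁ l) (hvinj.ne hkl)) (hdist k l hkl) (hvu k l hkl)
  obtain ⟨R₂, hR₂, hw₀, hw₁⟩ := (hww 0 1 (by decide)).2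
  have hw₂ := mem_of_adj_of_adj hR₂ hw₀ hw₁ (hww 0 1 (by decide)).ne (hww 2 0 (by decide))
    (hww 2 1 (by decide))
  have huw₀ := adj_of_mem (hC 0) (huC 0) (hwC 0) (hwu 0).symm
  have hvw₀ := adj_of_mem (hC 0) (hvC 0) (hwC 0) (hwv 0).symm
  have d₀₁ := disjoint_of_parallel hR₀ hR₁ (huR₀ 0) (huR₀ 1) (hvR₁ 0) (hvR₁ 1) (hadj 0)
    (hdist 0 1 (by decide)) (hdist 1 0 (by decide))
  have d₀₂ := disjoint_of_parallel hR₀ hR₂ (huR₀ 0) (huR₀ 1) hw₀ hw₁ huw₀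
    (huw 0 1 (by decide)) (huw 1 0 (by decide))
  have d₁₂ := disjoint_of_parallel hR₁ hR₂ (hvR₁ 0) (hvR₁ 1) hw₀ hw₁ hvw₀
    (hvw 0 1 (by decide)) (hvw 1 0 (by decide))
  refine ⟨w, isGrid_of_pairwise_disjoint ![R₀, R₁, R₂] ?_ ?_ ?_ ?_ ?_⟩
  · intro i; fin_cases i <;> assumption
  · intro i j; fin_cases i <;> fin_cases j <;> simp [huR₀, hvR₁, hw₀, hw₁, hw₂]
  · intro i j hij
    fin_cases i <;> fin_cases j <;> first
      | exact absurd rfl hij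
      | simp only [Function.onFun]; first | assumption | exact Disjoint.symm ‹_›
  · intro i; fin_cases i
    exacts [huinj, hvinj, fun k l h => by_contra fun hkl => (hww k l hkl).ne h]
  · exact fun j => ⟨C j, hC j, fun i => by fin_cases i; exacts [huC j, hvC j, hwC j]⟩

theorem exists_isGrid (h3 : ∀ L ∈ N.Lines, L.ncard = 3) (hxy : (collGraph N.Lines).dist x y = 2)
    (hz₁ : z₁ ∈ (collGraph N.Lines).commonNeighbors x y)
    (hz₂ : z₂ ∈ (collGraph N.Lines).commonNeighbors x y) (hz : z₁ ≠ z₂) :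
    ∃ p, N.IsGrid p ∧ p 0 0 = x ∧ p 0 1 = z₁ ∧ p 1 0 = z₂ ∧ p 1 1 = y := by
  have hzz : (collGraph N.Lines).dist z₁ z₂ = 2 :=
    dist_eq_two_of_adj_of_adj hz (not_adj_of_mem_commonNeighbors hxy hz₁ hz₂ hz) hz₁.1.symm hz₂.1
  obtain ⟨hxz₁, hyz₁⟩ := (collGraph N.Lines).mem_commonNeighbors.mp hz₁
  obtain ⟨hxz₂, hyz₂⟩ := (collGraph N.Lines).mem_commonNeighbors.mp hz₂
  obtain ⟨R₀, hR₀, hxR₀, hz₁R₀⟩ := hxz₁.2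
  obtain ⟨a, hax, haz₁, rfl⟩ := exists_eq_insert_insert h3 hR₀ hxR₀ hz₁R₀ hxz₁.ne
  obtain ⟨R₁, hR₁, hz₂R₁, hyR₁⟩ := hyz₂.symm.2
  obtain ⟨b, hbz₂, hby, rfl⟩ := exists_eq_insert_insert h3 hR₁ hz₂R₁ hyR₁ hyz₂.ne'
  obtain ⟨hya, hz₂a⟩ := dist_eq_two_of_mem_commonNeighbors hxy hz₁ hz₂ hz hR₀
    (by simp) (by simp) (by simp) hax haz₁
  rw [commonNeighbors_symm] at hz₁ hz₂
  obtain ⟨hxb, hz₁b⟩ := dist_eq_two_of_mem_commonNeighbors (dist_comm.trans hxy) hz₂ hz₁ hz.symm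
    hR₁ (by simp) (by simp) (by simp) hby hbz₂
  have hab := adj_of_parallel h3 hR₀ hR₁ (u₁ := x) (u₂ := z₁) (v₁ := z₂) (v₂ := y)
    (by simp) (by simp) (by simp) (by simp) (by simp) (by simp) hax haz₁ hbz₂ hby
    hxz₂ hyz₁.symm hxy hzz
  obtain ⟨w, hw⟩ := exists_isGrid_of_parallel h3 (u := ![x, z₁, a]) (v := ![z₂, y, b])
    ⟨_, hR₀, fun k => by fin_cases k <;> simp⟩ ⟨_, hR₁, fun k => by fin_cases k <;> simp⟩
    (injective_vecCons_three hxz₁.ne hax.symm haz₁.symm)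
    (fun k => by fin_cases k; exacts [hxz₂, hyz₁.symm, hab])
    (fun k l hkl => by
      fin_cases k <;> fin_cases l <;> simp at hkl ⊢ <;>
        first | assumption | exact dist_comm.trans ‹_›)
  exact ⟨_, hw, rfl, rfl, rfl, rfl⟩

end GridConstruction

section Finiteness

open Set

variable {d : ℕ} {N : NearPolygon P d}

theorem finite_neighborSet {s t : ℕ} (hord : N.hasOrder s t) (x : P) :
    ((collGraph N.Lines).neighborSet x).Finite := by
  have hlines : {L | L ∈ N.Lines ∧ x ∈ L}.Finite :=
    finite_of_ncard_pos (by rw [hord.2 x]; omega)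
  refine (hlines.biUnion fun L hL => finite_of_ncard_pos (by rw [hord.1 L hL.1]; omega)).subset ?_
  rintro y ⟨-, L, hL, hxL, hyL⟩
  exact mem_biUnion ⟨hL, hxL⟩ hyL

theorem finite_of_hasOrder {s t : ℕ} (hord : N.hasOrder s t) : Finite P := by
  have hball : ∀ (x : P) (n : ℕ), {y | (collGraph N.Lines).dist x y ≤ n}.Finite := by
    intro x n
    induction n with
    | zero =>
      refine (finite_singleton x).subset fun y hy => ?_
      exact (N.connected.dist_eq_zero_iff.mp (Nat.le_zero.mp hy)).symm
    | succ n ih =>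
      refine (ih.union (ih.biUnion fun z _ => N.finite_neighborSet hord z)).subset fun y hy => ?_
      rcases (Nat.le_succ_iff.mp hy) with hy | hy
      · exact .inl hy
      · obtain ⟨z, hyz, hzx⟩ := exists_adj_dist_eq (dist_comm.trans hy)
        exact .inr (mem_biUnion (dist_comm.trans hzx).le hyz.symm)
  obtain ⟨x⟩ := N.connected.nonempty
  exact finite_univ_iff.mp ((hball x d).subset fun y _ => N.diam_le x y)

end Finiteness

section Counting

open Finset
open scoped Classical

variable {d : ℕ} {N : NearPolygon P d} [Fintype P]

noncomputable def linesThrough {d : ℕ} (N : NearPolygon P d) (z : P) : Finset (Set P) :=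
  {L | L ∈ N.Lines ∧ z ∈ L}

noncomputable def sphere {d : ℕ} (N : NearPolygon P d) (x : P) (k : ℕ) : Finset P :=
  {y | (collGraph N.Lines).dist x y = k}

theorem mu_eq_card (x y : P) :
    N.mu x y = #{w | (collGraph N.Lines).Adj x w ∧ (collGraph N.Lines).Adj y w} := by
  rw [mu, ← Set.ncard_coe_finset]
  congr 1
  ext w
  simp [mem_commonNeighbors]

theorem card_linesThrough {s t : ℕ} (hord : N.hasOrder s t) (z : P) :
    #(N.linesThrough z) = t + 1 := by
  rw [← hord.2 z, linesThrough, ← Set.ncard_coe_finset]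
  simp

theorem card_filter_adj_eq_sum (z : P) (Q : P → Prop) [DecidablePred Q] :
    #{w | (collGraph N.Lines).Adj z w ∧ Q w} =
      ∑ L ∈ N.linesThrough z, #{w | w ∈ L ∧ w ≠ z ∧ Q w} := by
  have h := sum_card_bipartiteAbove_eq_sum_card_bipartiteBelow (fun w L => w ∈ L)
    (s := {w | (collGraph N.Lines).Adj z w ∧ Q w}) (t := N.linesThrough z)
  rw [sum_congr rfl fun w hw => ?_, ← card_eq_sum_ones] at h
  · rw [h]
    refine sum_congr rfl fun L hL => congrArg card ?_
    simp only [linesThrough, Finset.mem_filter, Finset.mem_univ, true_and] at hL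
    ext w
    simp only [bipartiteBelow, Finset.mem_filter, Finset.mem_univ, true_and]
    exact ⟨fun ⟨⟨hzw, hQ⟩, hw⟩ => ⟨hw, hzw.ne', hQ⟩,
      fun ⟨hw, hwz, hQ⟩ => ⟨⟨adj_of_mem hL.1 hL.2 hw hwz.symm, hQ⟩, hw⟩⟩
  · simp only [Finset.mem_filter, Finset.mem_univ, true_and] at hw
    obtain ⟨L, hL, hzL, hwL⟩ := hw.1.2
    rw [card_eq_one]
    refine ⟨L, ?_⟩
    ext L'
    simp only [bipartiteAbove, linesThrough, Finset.mem_filter, Finset.mem_univ, true_and,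
      Finset.mem_singleton]
    exact ⟨fun ⟨⟨hL', hzL'⟩, hwL'⟩ => N.unique_line L' hL' L hL z w hw.1.ne hzL' hwL' hzL hwL,
      by rintro rfl; exact ⟨⟨hL, hzL⟩, hwL⟩⟩

theorem card_filter_mem_eq {L : Set P} {z u v : P} (hL : L = {z, u, v}) (huv : u ≠ v)
    (huz : u ≠ z) (hvz : v ≠ z) (Q : P → Prop) [DecidablePred Q] :
    #{w | w ∈ L ∧ w ≠ z ∧ Q w} = (if Q u then 1 else 0) + (if Q v then 1 else 0) := by
  have : ({w | w ∈ L ∧ w ≠ z ∧ Q w} : Finset P) = ({u, v} : Finset P).filter Q := by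
    ext w
    simp only [hL, Finset.mem_filter, Finset.mem_univ, true_and, Finset.mem_insert,
      Finset.mem_singleton, Set.mem_insert_iff, Set.mem_singleton_iff]
    grind
  rw [this, card_filter, sum_pair huv]

-- By the nearest-point property the other two points of `L` are either both one step farther
-- from `x` than `z`, or one step closer and as far as `z`.
theorem card_farther_add_two_mul_card_closer_of_mem (h3 : ∀ L ∈ N.Lines, L.ncard = 3)
    {L : Set P} {z : P} (hL : L ∈ N.Lines) (hz : z ∈ L) (x : P) :
    #{w | w ∈ L ∧ w ≠ z ∧ (collGraph N.Lines).dist x w = (collGraph N.Lines).dist x z + 1} +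
      2 * #{w | w ∈ L ∧ w ≠ z ∧
        (collGraph N.Lines).dist x w + 1 = (collGraph N.Lines).dist x z} = 2 := by
  obtain ⟨u, v, huv, huz, hvz, hLe⟩ := exists_eq_insert_insert_of_mem h3 hL hz
  have hu : u ∈ L := by simp [hLe]
  have hv : v ∈ L := by simp [hLe]
  simp only [card_filter_mem_eq hLe huv huz hvz]
  rcases dist_cases_of_mem h3 hL hz hu hv huz.symm hvz.symm huv x with h | h | h <;>
    split_ifs <;> omega

theorem card_farther_add_two_mul_card_closer (hord : N.hasOrder 2 2) (x z : P) :
    #{w | (collGraph N.Lines).Adj z w ∧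
        (collGraph N.Lines).dist x w = (collGraph N.Lines).dist x z + 1} +
      2 * #{w | (collGraph N.Lines).Adj z w ∧
        (collGraph N.Lines).dist x w + 1 = (collGraph N.Lines).dist x z} = 6 := by
  rw [card_filter_adj_eq_sum, card_filter_adj_eq_sum, mul_sum, ← sum_add_distrib,
    sum_congr rfl fun L hL => card_farther_add_two_mul_card_closer_of_mem hord.1
      (Finset.mem_filter.mp hL).2.1 (Finset.mem_filter.mp hL).2.2 x,
    sum_const, card_linesThrough hord, smul_eq_mul]

theorem mem_sphere {x y : P} {k : ℕ} :
    y ∈ N.sphere x k ↔ (collGraph N.Lines).dist x y = k := by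
  simp [sphere]

theorem card_sphere_one (hord : N.hasOrder 2 2) (x : P) : #(N.sphere x 1) = 6 := by
  have h := card_farther_add_two_mul_card_closer hord x x
  simp only [dist_self, zero_add, Nat.add_eq_zero_iff, one_ne_zero, and_false,
    Finset.filter_false, Finset.card_empty, mul_zero, add_zero] at h
  rw [← h, sphere]
  congr 1
  ext w
  simp [dist_eq_one_iff_adj]

theorem card_farther_add_two_mul_mu (hord : N.hasOrder 2 2) {x y : P}
    (hxy : (collGraph N.Lines).dist x y = 2) :
    #{w | (collGraph N.Lines).Adj y w ∧ (collGraph N.Lines).dist x w = 3} + 2 * N.mu x y = 6 := by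
  have h := card_farther_add_two_mul_card_closer hord x y
  rw [hxy] at h
  rw [← h, mu_eq_card]
  congr 3
  ext w
  simp only [Finset.mem_filter, Finset.mem_univ, true_and, Nat.reduceEqDiff, dist_eq_one_iff_adj]
  exact and_comm

theorem dist_le_two_of_three_le_mu (hord : N.hasOrder 2 2) {x y w : P}
    (hxy : (collGraph N.Lines).dist x y = 2) (hμ : 3 ≤ N.mu x y)
    (hyw : (collGraph N.Lines).Adj y w) : (collGraph N.Lines).dist x w ≤ 2 := by
  have h := card_farther_add_two_mul_mu hord hxy
  have hw : (collGraph N.Lines).dist x w ≠ 3 := fun hw => by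
    have : 0 < #{w | (collGraph N.Lines).Adj y w ∧ (collGraph N.Lines).dist x w = 3} :=
      Finset.card_pos.mpr ⟨w, by simp [hyw, hw]⟩
    omega
  have := N.connected.dist_triangle (u := x) (v := y) (w := w)
  rw [hxy, dist_eq_one_iff_adj.mpr hyw] at this
  omega

theorem sum_mu_sphere_two (hord : N.hasOrder 2 2) (x : P) :
    ∑ y ∈ N.sphere x 2, N.mu x y = 24 := by
  have h4 : ∀ z ∈ N.sphere x 1,
      #((N.sphere x 2).bipartiteAbove (collGraph N.Lines).Adj z) = 4 := by
    intro z hz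
    have h := card_farther_add_two_mul_card_closer hord x z
    rw [mem_sphere.mp hz] at h
    have hx : ({w | (collGraph N.Lines).Adj z w ∧ (collGraph N.Lines).dist x w + 1 = 1} :
        Finset P) = {x} := by
      ext w
      simp only [Finset.mem_filter, Finset.mem_univ, true_and, Nat.add_eq_right,
        N.connected.dist_eq_zero_iff, Finset.mem_singleton]
      constructor
      · exact fun h => h.2.symm
      · rintro rfl; exact ⟨(dist_eq_one_iff_adj.mp (mem_sphere.mp hz)).symm, rfl⟩
    rw [hx, Finset.card_singleton] at h
    refine Eq.trans ?_ (show #{w | (collGraph N.Lines).Adj z w ∧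
      (collGraph N.Lines).dist x w = 1 + 1} = 4 by omega)
    congr 1
    ext w
    simp [bipartiteAbove, mem_sphere, and_comm]
  have h := sum_card_bipartiteAbove_eq_sum_card_bipartiteBelow (collGraph N.Lines).Adj
    (s := N.sphere x 1) (t := N.sphere x 2)
  rw [sum_congr rfl h4, sum_const, card_sphere_one hord, smul_eq_mul] at h
  rw [show (24 : ℕ) = 6 * 4 from rfl, h]
  refine sum_congr rfl fun y _ => ?_
  rw [mu_eq_card]
  congr 1
  ext w
  simp [bipartiteBelow, mem_sphere, dist_eq_one_iff_adj, adj_comm]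

end Counting

section ThreeCommonNeighbours

open Set

variable {d : ℕ} {N : NearPolygon P d} {b x y z v w : P}

-- The line `yw` contains a common neighbour `z₁` of `x` and `y`. For two further common
-- neighbours `z`, the third point of the line `xz` is adjacent to `w` (`adj_of_parallel`), which
-- gives three common neighbours of `x` and `w`.
theorem three_le_mu_of_adj [Finite P] (h3 : ∀ L ∈ N.Lines, L.ncard = 3)
    (hxy : (collGraph N.Lines).dist x y = 2) (hμ : 3 ≤ N.mu x y)
    (hyw : (collGraph N.Lines).Adj y w) (hxw : (collGraph N.Lines).dist x w = 2) :
    3 ≤ N.mu x w := by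
  obtain ⟨M, hM, hyM, hwM⟩ := hyw.2
  obtain ⟨z₁, hz₁y, hz₁w, rfl⟩ := exists_eq_insert_insert h3 hM hyM hwM hyw.ne
  have hxz₁ : (collGraph N.Lines).Adj x z₁ := by
    rw [← dist_eq_one_iff_adj]
    rcases dist_cases_of_mem h3 hM (by simp) (by simp) (by simp) hyw.ne hz₁y.symm hz₁w.symm x
      with h | h | h <;> omega
  have hz₁ : z₁ ∈ (collGraph N.Lines).commonNeighbors x y :=
    ⟨hxz₁, adj_of_mem hM (by simp) (by simp) hz₁y.symm⟩
  have hpar : ∀ z ∈ (collGraph N.Lines).commonNeighbors x y, z ≠ z₁ → ∃ C ∈ N.Lines, ∃ a,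
      x ∈ C ∧ z ∈ C ∧ a ∈ C ∧ a ≠ x ∧ (collGraph N.Lines).Adj a w := by
    intro z hz hzz₁
    obtain ⟨hxz, hyz⟩ := (collGraph N.Lines).mem_commonNeighbors.mp hz
    obtain ⟨C, hC, hxC, hzC⟩ := hxz.2
    obtain ⟨a, hax, haz, rfl⟩ := exists_eq_insert_insert h3 hC hxC hzC hxz.ne
    refine ⟨_, hC, a, by simp, by simp, by simp, hax, ?_⟩
    exact adj_of_parallel h3 hC hM (u₁ := x) (u₂ := z) (v₁ := z₁) (v₂ := y) (by simp) (by simp)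
      (by simp) (by simp) (by simp) (by simp) hax haz hz₁w.symm hyw.ne' hxz₁ hyz.symm hxy
      (dist_eq_two_of_adj_of_adj hzz₁ (not_adj_of_mem_commonNeighbors hxy hz hz₁ hzz₁)
        hxz.symm hxz₁)
  obtain ⟨z₂, z₃, ⟨hz₂, hz₂₁⟩, ⟨hz₃, hz₃₁⟩, hz₂₃⟩ :=
    (one_lt_ncard_iff (s := (collGraph N.Lines).commonNeighbors x y \ {z₁})).mp <| by
      rw [ncard_sdiff_singleton_of_mem hz₁]; rw [mu] at hμ; omega
  rw [mem_singleton_iff] at hz₂₁ hz₃₁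
  obtain ⟨C₂, hC₂, a₂, hxC₂, hz₂C₂, ha₂C₂, ha₂x, ha₂w⟩ := hpar z₂ hz₂ hz₂₁
  obtain ⟨C₃, hC₃, a₃, hxC₃, hz₃C₃, ha₃C₃, ha₃x, ha₃w⟩ := hpar z₃ hz₃ hz₃₁
  have ha₂z₁ : a₂ ≠ z₁ := by
    rintro rfl
    exact not_adj_of_mem_commonNeighbors hxy hz₂ hz₁ hz₂₁ (adj_of_mem hC₂ hz₂C₂ ha₂C₂ hz₂₁)
  have ha₃z₁ : a₃ ≠ z₁ := by
    rintro rfl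
    exact not_adj_of_mem_commonNeighbors hxy hz₃ hz₁ hz₃₁ (adj_of_mem hC₃ hz₃C₃ ha₃C₃ hz₃₁)
  have ha₂a₃ : a₂ ≠ a₃ := by
    rintro rfl
    obtain rfl := N.unique_line C₂ hC₂ C₃ hC₃ x a₂ ha₂x.symm hxC₂ ha₂C₂ hxC₃ ha₃C₃
    exact not_adj_of_mem_commonNeighbors hxy hz₂ hz₃ hz₂₃ (adj_of_mem hC₂ hz₂C₂ hz₃C₃ hz₂₃)
  rw [mu, Nat.succ_le_iff, two_lt_ncard_iff]
  exact ⟨z₁, a₂, a₃, ⟨hxz₁, adj_of_mem hM (by simp) (by simp) hz₁w.symm⟩,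
    ⟨adj_of_mem hC₂ hxC₂ ha₂C₂ ha₂x.symm, ha₂w.symm⟩,
    ⟨adj_of_mem hC₃ hxC₃ ha₃C₃ ha₃x.symm, ha₃w.symm⟩, ha₂z₁.symm, ha₃z₁.symm, ha₂a₃⟩

-- Since `μ(b, z) ≥ 3`, every neighbour of `z` is within distance 2 of `b`, so the line `zv` has a
-- point adjacent to `b`; `three_le_mu_of_adj` then moves from `b` along that line to `v`.
theorem three_le_mu_of_adj_of_adj [Fintype P] (hord : N.hasOrder 2 2)
    (hxb : (collGraph N.Lines).dist x b = 2) (hμ : 3 ≤ N.mu x b)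
    (hxz : (collGraph N.Lines).Adj x z) (hzb : (collGraph N.Lines).dist z b = 2)
    (hzv : (collGraph N.Lines).Adj z v) (hxv : (collGraph N.Lines).dist x v = 2) :
    3 ≤ N.mu x v := by
  have h3 : ∀ L ∈ N.Lines, L.ncard = 3 := hord.1
  have hbz : 3 ≤ N.mu b z := by
    rw [mu_comm] at hμ
    exact three_le_mu_of_adj h3 (dist_comm.trans hxb) hμ hxz (dist_comm.trans hzb)
  obtain ⟨K, hK, hzK, hvK⟩ := hzv.2
  obtain ⟨v', hv'z, hv'v, rfl⟩ := exists_eq_insert_insert h3 hK hzK hvK hzv.ne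
  have hbv := dist_le_two_of_three_le_mu hord (dist_comm.trans hzb) hbz hzv
  have hbv' := dist_le_two_of_three_le_mu hord (dist_comm.trans hzb) hbz
    (adj_of_mem hK (by simp) (by simp) hv'z.symm)
  have hxK := notMem_of_dist_eq_two hK (by simp) hxv
  have hbz' : (collGraph N.Lines).dist b z = 2 := SimpleGraph.dist_comm.trans hzb
  rcases dist_cases_of_mem h3 hK (by simp) (by simp) (by simp) hzv.ne hv'z.symm hv'v.symm b
    with h | h | h
  · omega
  · exact three_le_mu_of_adj h3 hxb hμ (dist_eq_one_iff_adj.mp (by omega)) hxv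
  · have hxv' := dist_eq_two_of_adj_of_notMem hK (by simp) (by simp) hv'z.symm hxz hxK
    have hbv'adj : (collGraph N.Lines).Adj b v' := dist_eq_one_iff_adj.mp (by omega)
    exact three_le_mu_of_adj h3 hxv' (three_le_mu_of_adj h3 hxb hμ hbv'adj hxv')
      (adj_of_mem hK (by simp) (by simp) hv'v) hxv

-- For a common neighbour `z` of `x` and `v` it suffices to find `b` with `μ(x, b) ≥ 3` and
-- `d(z, b) = 2`: either `y`, or, when `z` is adjacent to `y`, a neighbour off the line `xz` of
-- the third point of that line.
theorem three_le_mu_of_dist_eq_two [Fintype P] (hord : N.hasOrder 2 2)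
    (hxy : (collGraph N.Lines).dist x y = 2) (hμ : 3 ≤ N.mu x y)
    (hxv : (collGraph N.Lines).dist x v = 2) : 3 ≤ N.mu x v := by
  have h3 : ∀ L ∈ N.Lines, L.ncard = 3 := hord.1
  obtain ⟨z, hxz, hzv⟩ := exists_adj_dist_eq (k := 1) hxv
  rw [dist_eq_one_iff_adj] at hzv
  obtain ⟨K, hK, hxK, hzK⟩ := hxz.2
  obtain ⟨a, hax, haz, rfl⟩ := exists_eq_insert_insert h3 hK hxK hzK hxz.ne
  have hyx : (collGraph N.Lines).dist y x = 2 := SimpleGraph.dist_comm.trans hxy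
  have hyμ : 3 ≤ N.mu y x := by rwa [mu_comm] at hμ
  have hyz := dist_le_two_of_three_le_mu hord hyx hyμ hxz
  have hya := dist_le_two_of_three_le_mu hord hyx hyμ (adj_of_mem hK (by simp) (by simp) hax.symm)
  rcases dist_cases_of_mem h3 hK (by simp) (by simp) (by simp) hxz.ne hax.symm haz.symm y
    with h | h | h
  · omega
  · obtain ⟨c, hac, hcK⟩ := exists_adj_notMem hord two_ne_zero hK (by simp : a ∈ _)
    have hxc := dist_eq_two_of_adj_of_notMem hK (by simp) (by simp) hax hac.symm hcK
    have hzc := dist_eq_two_of_adj_of_notMem hK (by simp) (by simp) haz hac.symm hcK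
    have hμc := three_le_mu_of_adj_of_adj hord hxy hμ (adj_of_mem hK (by simp) (by simp) hax.symm)
      (by rw [SimpleGraph.dist_comm]; omega) hac (SimpleGraph.dist_comm.trans hxc)
    exact three_le_mu_of_adj_of_adj hord (SimpleGraph.dist_comm.trans hxc) hμc hxz
      (SimpleGraph.dist_comm.trans hzc) hzv hxv
  · exact three_le_mu_of_adj_of_adj hord hxy hμ hxz (by rw [SimpleGraph.dist_comm]; omega) hzv hxv

end ThreeCommonNeighbours

section GridCounting

open Finset
open scoped Classical

variable {d : ℕ} {N : NearPolygon P d} {p q : Fin 3 → Fin 3 → P} {x y : P}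

namespace IsGrid

theorem card_image (hp : N.IsGrid p) : #(Finset.univ.image (uncurry p)) = 9 := by
  rw [card_image_of_injective _ hp.injective]
  rfl

theorem image_transpose :
    Finset.univ.image (uncurry fun i j => p j i) = Finset.univ.image (uncurry p) := by
  ext y
  simp only [Finset.mem_image, Finset.mem_univ, true_and, Prod.exists, uncurry_apply_pair]
  exact exists_comm

theorem exists_reindex (hp : N.IsGrid p) {i i' j j' : Fin 3} (hi : i ≠ i') (hj : j ≠ j') :
    ∃ q, N.IsGrid q ∧ Finset.univ.image (uncurry q) = Finset.univ.image (uncurry p) ∧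
      q 0 0 = p i j ∧ q 1 1 = p i' j' := by
  obtain ⟨σ, hσ₀, hσ₁⟩ := exists_perm_fin_three hi
  obtain ⟨τ, hτ₀, hτ₁⟩ := exists_perm_fin_three hj
  refine ⟨_, hp.reindex σ τ, ?_, by simp [hσ₀, hτ₀], by simp [hσ₁, hτ₁]⟩
  ext y
  simp only [Finset.mem_image, Finset.mem_univ, true_and, Prod.exists, uncurry_apply_pair]
  exact ⟨fun ⟨a, b, h⟩ => ⟨σ a, τ b, h⟩,
    fun ⟨a, b, h⟩ => ⟨σ.symm a, τ.symm b, by simpa using h⟩⟩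

theorem eq_or_eq_transpose [Finite P] (h3 : ∀ L ∈ N.Lines, L.ncard = 3) (hp : N.IsGrid p)
    (hq : N.IsGrid q) (e₀₀ : p 0 0 = q 0 0) (e₁₁ : p 1 1 = q 1 1)
    (hμ : N.mu (p 0 0) (p 1 1) ≤ 2) : p = q ∨ p = fun i j => q j i := by
  have hcn : ∀ z ∈ (collGraph N.Lines).commonNeighbors (p 0 0) (p 1 1),
      z = p 0 1 ∨ z = p 1 0 := by
    intro z hz
    by_contra! hne
    have : 2 < N.mu (p 0 0) (p 1 1) := (Set.two_lt_ncard_iff).mpr ⟨p 0 1, p 1 0, z,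
      ⟨hp.adj_row (by decide), hp.adj_col (by decide)⟩,
      ⟨hp.adj_col (by decide), hp.adj_row (by decide)⟩, hz, by simp [hp.eq_iff], hne.1.symm,
      hne.2.symm⟩
    omega
  have hq₀₁ := hcn (q 0 1) ⟨e₀₀ ▸ hq.adj_row (by decide), e₁₁ ▸ hq.adj_col (by decide)⟩
  have hq₁₀ := hcn (q 1 0) ⟨e₀₀ ▸ hq.adj_col (by decide), e₁₁ ▸ hq.adj_row (by decide)⟩
  have hq₀₁₀ : q 0 1 ≠ q 1 0 := by simp [hq.eq_iff]
  rcases hq₀₁ with h₀₁ | h₀₁ <;> rcases hq₁₀ with h₁₀ | h₁₀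
  · exact absurd (h₀₁.trans h₁₀.symm) hq₀₁₀
  · exact .inl (eq_of_eq h3 hp hq e₀₀ h₀₁.symm h₁₀.symm e₁₁)
  · exact .inr (eq_of_eq h3 hp hq.transpose e₀₀ h₁₀.symm h₀₁.symm e₁₁)
  · exact absurd (h₀₁.trans h₁₀.symm) hq₀₁₀

theorem image_eq_of_dist_eq_two [Finite P] (h3 : ∀ L ∈ N.Lines, L.ncard = 3) (hp : N.IsGrid p)
    (hq : N.IsGrid q) (hxp : x ∈ Finset.univ.image (uncurry p))
    (hyp : y ∈ Finset.univ.image (uncurry p)) (hxq : x ∈ Finset.univ.image (uncurry q))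
    (hyq : y ∈ Finset.univ.image (uncurry q)) (hxy : (collGraph N.Lines).dist x y = 2)
    (hμ : N.mu x y ≤ 2) : Finset.univ.image (uncurry p) = Finset.univ.image (uncurry q) := by
  simp only [Finset.mem_image, Finset.mem_univ, true_and, Prod.exists, uncurry_apply_pair]
    at hxp hyp hxq hyq
  obtain ⟨i, j, rfl⟩ := hxp
  obtain ⟨i', j', rfl⟩ := hyp
  obtain ⟨k, l, hkl⟩ := hxq
  obtain ⟨k', l', hkl'⟩ := hyq
  obtain ⟨hi, hj⟩ := hp.ne_of_dist_eq_two hxy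
  obtain ⟨hk, hl⟩ := hq.ne_of_dist_eq_two (hkl ▸ hkl' ▸ hxy)
  obtain ⟨p', hp', hp'im, hp'₀, hp'₁⟩ := hp.exists_reindex hi hj
  obtain ⟨q', hq', hq'im, hq'₀, hq'₁⟩ := hq.exists_reindex hk hl
  rw [← hp'im, ← hq'im]
  rcases hp'.eq_or_eq_transpose h3 hq' (hp'₀.trans (hkl.symm.trans hq'₀.symm))
    (hp'₁.trans (hkl'.symm.trans hq'₁.symm)) (hp'₀ ▸ hp'₁ ▸ hμ) with rfl | rfl
  exacts [rfl, image_transpose]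

end IsGrid

variable [Fintype P]

noncomputable def grids {d : ℕ} (N : NearPolygon P d) : Finset (Finset P) :=
  {Q | ∃ p, N.IsGrid p ∧ Q = Finset.univ.image (uncurry p)}

theorem mem_grids {Q : Finset P} :
    Q ∈ N.grids ↔ ∃ p, N.IsGrid p ∧ Q = Finset.univ.image (uncurry p) := by
  simp [grids]

theorem card_partners (h3 : ∀ L ∈ N.Lines, L.ncard = 3)
    (hμ : ∀ x y, (collGraph N.Lines).dist x y = 2 → N.mu x y ≤ 2) (x : P) :
    #{y ∈ N.sphere x 2 | N.mu x y = 2} = 4 * #{Q ∈ N.grids | x ∈ Q} := by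
  have h := card_mul_eq_card_mul (fun y (Q : Finset P) => y ∈ Q) (m := 1) (n := 4)
    (s := {y ∈ N.sphere x 2 | N.mu x y = 2}) (t := {Q ∈ N.grids | x ∈ Q})
    ?_ ?_
  · rw [mul_one] at h; rw [h, mul_comm]
  · intro y hy
    simp only [Finset.mem_filter, mem_sphere] at hy
    obtain ⟨z₁, z₂, hz, hcn⟩ := Set.ncard_eq_two.mp hy.2
    obtain ⟨p, hp, hp₀₀, -, -, hp₁₁⟩ := exists_isGrid h3 hy.1 (z₁ := z₁) (z₂ := z₂)
      (by simp [hcn]) (by simp [hcn]) hz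
    have hxp : x ∈ Finset.univ.image (uncurry p) :=
      Finset.mem_image.mpr ⟨(0, 0), by simp [hp₀₀]⟩
    have hyp : y ∈ Finset.univ.image (uncurry p) :=
      Finset.mem_image.mpr ⟨(1, 1), by simp [hp₁₁]⟩
    rw [card_eq_one]
    refine ⟨Finset.univ.image (uncurry p),
      Finset.eq_singleton_iff_unique_mem.mpr ⟨?_, fun Q hQ => ?_⟩⟩
    · simp only [bipartiteAbove, Finset.mem_filter, mem_grids]
      exact ⟨⟨⟨p, hp, rfl⟩, hxp⟩, hyp⟩
    · simp only [bipartiteAbove, Finset.mem_filter, mem_grids] at hQ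
      obtain ⟨⟨⟨q, hq, rfl⟩, hxq⟩, hyq⟩ := hQ
      exact hq.image_eq_of_dist_eq_two h3 hp hxq hyq hxp hyp hy.1 (hμ x y hy.1)
  · intro Q hQ
    simp only [Finset.mem_filter, mem_grids] at hQ
    obtain ⟨⟨p, hp, rfl⟩, hxQ⟩ := hQ
    simp only [Finset.mem_image, Finset.mem_univ, true_and, Prod.exists, uncurry_apply_pair]
      at hxQ
    obtain ⟨i, j, rfl⟩ := hxQ
    have : ({y ∈ N.sphere (p i j) 2 | N.mu (p i j) y = 2} : Finset P).bipartiteBelow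
        (fun y Q => y ∈ Q) (Finset.univ.image (uncurry p)) =
        ((Finset.univ.erase i) ×ˢ (Finset.univ.erase j)).image (uncurry p) := by
      ext y
      simp only [bipartiteBelow, Finset.mem_filter, mem_sphere, Finset.mem_univ, true_and,
        Finset.mem_image, Prod.exists, uncurry_apply_pair, Finset.mem_product,
        Finset.mem_erase, ne_eq, and_true]
      constructor
      · rintro ⟨⟨hd, -⟩, a, b, rfl⟩
        obtain ⟨hi, hj⟩ := hp.ne_of_dist_eq_two hd
        exact ⟨a, b, ⟨hi.symm, hj.symm⟩, rfl⟩
      · rintro ⟨a, b, ⟨hi, hj⟩, rfl⟩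
        have hd := hp.dist_eq_two h3 (Ne.symm hi) (Ne.symm hj)
        refine ⟨⟨hd, le_antisymm (hμ _ _ hd) ((Set.one_lt_ncard_iff).mpr ?_)⟩, a, b, rfl⟩
        exact ⟨p i b, p a j, ⟨hp.adj_row (Ne.symm hj), hp.adj_col hi⟩,
          ⟨hp.adj_col (Ne.symm hi), hp.adj_row hj⟩, by simp [hp.eq_iff, Ne.symm hi]⟩
    rw [this, card_image_of_injOn (hp.injective.injOn), card_product, card_erase_of_mem
      (Finset.mem_univ _), card_erase_of_mem (Finset.mem_univ _)]
    rfl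

theorem card_mul_eq_card_grids_mul {g : ℕ} (hg : ∀ x, #{Q ∈ N.grids | x ∈ Q} = g) :
    Fintype.card P * g = #N.grids * 9 := by
  refine card_mul_eq_card_mul (fun x (Q : Finset P) => x ∈ Q) (fun x _ => hg x) fun Q hQ => ?_
  obtain ⟨p, hp, rfl⟩ := mem_grids.mp hQ
  rw [bipartiteBelow, filter_mem_eq_inter, Finset.univ_inter, hp.card_image]

end GridCounting

section NearHexagon

open Finset
open scoped Classical

variable {N : NearPolygon P 3} [Fintype P]

theorem three_mul_card_sphere_three (hord : N.hasOrder 2 2) (x : P) :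
    3 * #(N.sphere x 3) + 48 = 6 * #(N.sphere x 2) := by
  have h3 : ∀ v ∈ N.sphere x 3,
      #((N.sphere x 2).bipartiteBelow (collGraph N.Lines).Adj v) = 3 := by
    intro v hv
    have h := card_farther_add_two_mul_card_closer hord x v
    rw [mem_sphere.mp hv] at h
    have h0 : ({w | (collGraph N.Lines).Adj v w ∧ (collGraph N.Lines).dist x w = 3 + 1} :
        Finset P) = ∅ := by
      ext w
      simp only [Finset.mem_filter, Finset.mem_univ, true_and, Finset.notMem_empty, iff_false]
      have := N.diam_le x w
      omega
    rw [h0, Finset.card_empty, zero_add] at h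
    refine Eq.trans ?_ (show #{w | (collGraph N.Lines).Adj v w ∧
      (collGraph N.Lines).dist x w + 1 = 3} = 3 by omega)
    congr 1
    ext w
    simp [bipartiteBelow, mem_sphere, adj_comm, and_comm]
  have h := sum_card_bipartiteAbove_eq_sum_card_bipartiteBelow (collGraph N.Lines).Adj
    (s := N.sphere x 2) (t := N.sphere x 3)
  rw [sum_congr rfl h3, sum_const, smul_eq_mul] at h
  have h6 : ∀ y ∈ N.sphere x 2,
      #((N.sphere x 3).bipartiteAbove (collGraph N.Lines).Adj y) + 2 * N.mu x y = 6 := by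
    intro y hy
    rw [← card_farther_add_two_mul_mu hord (mem_sphere.mp hy)]
    congr 2
    ext w
    simp [bipartiteAbove, mem_sphere, and_comm]
  have h' : ∑ y ∈ N.sphere x 2,
      (#((N.sphere x 3).bipartiteAbove (collGraph N.Lines).Adj y) + 2 * N.mu x y) =
        6 * #(N.sphere x 2) := by
    rw [sum_congr rfl h6, sum_const, smul_eq_mul, mul_comm]
  rw [sum_add_distrib, h, ← mul_sum, sum_mu_sphere_two hord x] at h'
  omega

theorem card_eq_add_card_sphere (hord : N.hasOrder 2 2) (x : P) :
    Fintype.card P = 7 + #(N.sphere x 2) + #(N.sphere x 3) := by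
  have h := card_eq_sum_card_fiberwise (s := univ) (t := range 4)
    (f := (collGraph N.Lines).dist x) fun y _ => mem_range.mpr (Nat.lt_succ_of_le (N.diam_le x y))
  have h0 : ({y | (collGraph N.Lines).dist x y = 0} : Finset P) = {x} := by
    ext y
    simp [N.connected.dist_eq_zero_iff, eq_comm]
  simp only [sum_range_succ, sum_range_zero, zero_add, h0, Finset.card_singleton] at h
  rw [Finset.card_univ] at h
  have h₁ := card_sphere_one hord x
  simp only [sphere] at h₁ ⊢
  omega

theorem nine_mul_card_sphere_two (hord : N.hasOrder 2 2) (x : P) :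
    9 * #(N.sphere x 2) = 3 * Fintype.card P + 27 := by
  have h₁ := three_mul_card_sphere_three hord x
  have h₂ := card_eq_add_card_sphere hord x
  omega

theorem mu_le_two (hord : N.hasOrder 2 2) {x y : P} (hxy : (collGraph N.Lines).dist x y = 2) :
    N.mu x y ≤ 2 := by
  by_contra! hμ
  have hempty : N.sphere x 3 = ∅ := by
    refine eq_empty_of_forall_notMem fun v hv => ?_
    obtain ⟨u, hvu, hux⟩ :=
      exists_adj_dist_eq (k := 2) (SimpleGraph.dist_comm.trans (mem_sphere.mp hv))
    have hxu : (collGraph N.Lines).dist x u = 2 := SimpleGraph.dist_comm.trans hux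
    have := dist_le_two_of_three_le_mu hord hxu (three_le_mu_of_dist_eq_two hord hxy hμ hxu)
      hvu.symm
    rw [mem_sphere.mp hv] at this
    omega
  have hx := three_mul_card_sphere_three hord x
  have hcard := nine_mul_card_sphere_two hord x
  rw [hempty, Finset.card_empty] at hx
  obtain ⟨u, v, huv⟩ := N.diam_eq
  have hu := three_mul_card_sphere_three hord u
  have hcard' := nine_mul_card_sphere_two hord u
  have : 0 < #(N.sphere u 3) := card_pos.mpr ⟨v, mem_sphere.mpr huv⟩
  omega

theorem card_sphere_two_add_card_filter_mu_eq_two (hord : N.hasOrder 2 2) (x : P) :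
    #(N.sphere x 2) + #{y ∈ N.sphere x 2 | N.mu x y = 2} = 24 := by
  rw [← sum_mu_sphere_two hord x, card_filter, card_eq_sum_ones, ← sum_add_distrib]
  refine sum_congr rfl fun y hy => ?_
  have h₁ := one_le_mu (mem_sphere.mp hy)
  have h₂ := mu_le_two hord (mem_sphere.mp hy)
  split_ifs <;> omega

theorem mu_eq_one_or_mu_eq_two (hord : N.hasOrder 2 2) :
    (∀ x y, (collGraph N.Lines).dist x y = 2 → N.mu x y = 1) ∨
      (∀ x y, (collGraph N.Lines).dist x y = 2 → N.mu x y = 2) := by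
  have hpartners := card_sphere_two_add_card_filter_mu_eq_two hord
  have hsphere := nine_mul_card_sphere_two hord
  have hgrids := card_partners hord.1 fun x y => mu_le_two hord
  obtain ⟨x₀⟩ := N.connected.nonempty
  obtain ⟨g, hg⟩ : ∃ g, ∀ x, #{Q ∈ N.grids | x ∈ Q} = g := by
    refine ⟨#{Q ∈ N.grids | x₀ ∈ Q}, fun x => ?_⟩
    have := hpartners x; have := hpartners x₀; have := hsphere x; have := hsphere x₀
    have := hgrids x; have := hgrids x₀
    omega
  -- `4 g` points of `Γ₂(x)` have `μ = 2`, so `|P| = 63 - 12 g`; with `|P| g = 9 #grids`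
  -- only `g = 0` and `g = 3` survive.
  have hcount := card_mul_eq_card_grids_mul hg
  have hle := card_filter_le (N.sphere x₀ 2) fun y => N.mu x₀ y = 2
  have := hpartners x₀; have := hsphere x₀; have := hgrids x₀; have := hg x₀
  have hg₃ : g ≤ 3 := by omega
  interval_cases g
  · left
    intro x y hxy
    have h0 : {y ∈ N.sphere x 2 | N.mu x y = 2} = ∅ := card_eq_zero.mp (by rw [hgrids, hg])
    have h2 : N.mu x y ≠ 2 := fun h => by
      simpa [h0] using (mem_filter.mpr ⟨mem_sphere.mpr hxy, h⟩ :
        y ∈ ({y ∈ N.sphere x 2 | N.mu x y = 2} : Finset P))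
    have := one_le_mu hxy; have := mu_le_two hord hxy
    omega
  · omega
  · omega
  · right
    intro x y hxy
    have := hpartners x; have := hsphere x; have := hgrids x; have := hg x
    have hall : #{y ∈ N.sphere x 2 | N.mu x y = 2} = #(N.sphere x 2) := by omega
    exact card_filter_eq_iff.mp hall y (mem_sphere.mpr hxy)

end NearHexagon

end NearPolygon

/-- In a near hexagon of order `(2,2)` there is a constant
`c ∈ {1,2}` such that any two points at distance `2` have exactly `c` common
neighbors. -/
theorem near_hexagon_constant_mu {P : Type*} (N : NearPolygon P 3)
    (hord : N.hasOrder 2 2) :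
    ∃ c ∈ ({1, 2} : Set ℕ), ∀ x y : P, (collGraph N.Lines).dist x y = 2 →
      {z : P | (collGraph N.Lines).Adj x z ∧ (collGraph N.Lines).Adj z y}.ncard = c := by
  have := N.finite_of_hasOrder hord
  cases nonempty_fintype P
  have hmu : ∀ x y : P, {z | (collGraph N.Lines).Adj x z ∧ (collGraph N.Lines).Adj z y}.ncard =
      N.mu x y := fun x y => by
    rw [NearPolygon.mu]
    congr 1
    ext z
    simp [SimpleGraph.mem_commonNeighbors, SimpleGraph.adj_comm]
  simp only [hmu]
  rcases N.mu_eq_one_or_mu_eq_two hord with h | h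
  · exact ⟨1, by simp, h⟩
  · exact ⟨2, by simp, h⟩
end

section
/- The near hexagon 𝕃₃×𝕃₃×𝕃₃ contains no full isometrically embedded subgeometry that is a generalized hexagon of order (2,1). -/
/-- The lines of the near hexagon `𝕃₃ × 𝕃₃ × 𝕃₃`: the points are the triples
in `(Fin 3)³` and the lines are the triples of points agreeing in two
coordinates and taking all three values in the remaining coordinate. -/
def L3cube : Set (Set (Fin 3 × Fin 3 × Fin 3)) :=
  {L | (∃ a b : Fin 3, L = {p | p.2.1 = a ∧ p.2.2 = b}) ∨
       (∃ a b : Fin 3, L = {p | p.1 = a ∧ p.2.2 = b}) ∨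
       (∃ a b : Fin 3, L = {p | p.1 = a ∧ p.2.1 = b})}

/- A full isometric embedding of a generalized hexagon of order `(2,1)` into `𝕃₃ × 𝕃₃ × 𝕃₃`
maps every line onto a line of one of the three coordinate directions, and a generalized
hexagon has no quadrangles; so the parallel lines through two collinear points of the image
cannot both lie in the image. Take a point `x` on hexagon lines of directions `i ≠ j`. The
second line through each of the two other points `y₁, y₂` of the `i`-line is then neither in
direction `i` nor, comparing with the `j`-line through `x`, in direction `j`. So both lie in
the third direction, and they are parallel lines through the collinear points `y₁, y₂`. -/

def UniqueCommonNeighbor {V : Type*} (G : SimpleGraph V) : Prop :=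
  ∀ x y : V, G.dist x y = 2 → ∃! z : V, G.Adj x z ∧ G.Adj z y

theorem SimpleGraph.dist_eq_two_of_adj_of_adj {V : Type*} {G : SimpleGraph V} {u v w : V}
    (huw : G.Adj u w) (hwv : G.Adj w v) (hne : u ≠ v) (hnadj : ¬ G.Adj u v) :
    G.dist u v = 2 := by
  rw [SimpleGraph.dist, SimpleGraph.edist_eq_two_iff.mpr ⟨hne, hnadj, w, huw, hwv.symm⟩]
  rfl

theorem fin_three_eq_of_ne {i j k l : Fin 3} (hij : i ≠ j) (hki : k ≠ i) (hkj : k ≠ j)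
    (hli : l ≠ i) (hlj : l ≠ j) : k = l := by
  omega

theorem NearPolygon.exists_line_ne {P : Type*} {d s t : ℕ} {H : NearPolygon P d}
    (hor : H.hasOrder s t) (ht : 0 < t) (y : P) (L : Set P) :
    ∃ M ∈ H.Lines, y ∈ M ∧ M ≠ L := by
  obtain ⟨M, ⟨hM, hyM⟩, hML⟩ :=
    Set.exists_ne_of_one_lt_ncard (by rw [hor.2 y]; omega) (s := {L | L ∈ H.Lines ∧ y ∈ L}) L
  exact ⟨M, hM, hyM, hML⟩

theorem IsFullIsomEmb.map_adj_iff {Q P : Type*} {LQ : Set (Set Q)} {LP : Set (Set P)}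
    {ι : Q → P} (emb : IsFullIsomEmb LQ LP ι) {x y : Q} :
    (collGraph LP).Adj (ι x) (ι y) ↔ (collGraph LQ).Adj x y := by
  rw [← SimpleGraph.dist_eq_one_iff_adj, ← SimpleGraph.dist_eq_one_iff_adj, emb.isometric]

namespace L3cube

abbrev Point := Fin 3 × Fin 3 × Fin 3

def coord (i : Fin 3) (p : Point) : Fin 3 := ![p.1, p.2.1, p.2.2] i

def line (i : Fin 3) (p : Point) : Set Point := {q | ∀ j ≠ i, coord j q = coord j p}

variable {i j : Fin 3} {p q r s : Point}

theorem ext_coord (h : ∀ i, coord i p = coord i q) : p = q :=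
  Prod.ext (h 0) (Prod.ext (h 1) (h 2))

theorem ne_of_coord_ne (h : coord i p ≠ coord i q) : p ≠ q :=
  fun hpq => h (hpq ▸ rfl)

theorem mem_line_self (i : Fin 3) (p : Point) : p ∈ line i p := fun _ _ => rfl

theorem line_eq_of_mem (h : q ∈ line i p) : line i q = line i p := by
  ext r
  exact forall₂_congr fun j hj => by rw [h j hj]

theorem coord_ne_of_mem_line (h : q ∈ line i p) (hne : q ≠ p) : coord i q ≠ coord i p := by
  refine fun hi => hne (ext_coord fun j => ?_)
  by_cases hj : j = i
  · exact hj ▸ hi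
  · exact h j hj

theorem exists_mem_line_coord_eq (i : Fin 3) (p : Point) (a : Fin 3) :
    ∃ q ∈ line i p, coord i q = a := by
  fin_cases i
  · exact ⟨(a, p.2.1, p.2.2), fun j hj => by fin_cases j <;> simp_all [coord], rfl⟩
  · exact ⟨(p.1, a, p.2.2), fun j hj => by fin_cases j <;> simp_all [coord], rfl⟩
  · exact ⟨(p.1, p.2.1, a), fun j hj => by fin_cases j <;> simp_all [coord], rfl⟩

theorem line_zero (p : Point) : line 0 p = {q | q.2.1 = p.2.1 ∧ q.2.2 = p.2.2} := by
  ext q; simp [line, coord, Fin.forall_fin_succ]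

theorem line_one (p : Point) : line 1 p = {q | q.1 = p.1 ∧ q.2.2 = p.2.2} := by
  ext q; simp [line, coord, Fin.forall_fin_succ]

theorem line_two (p : Point) : line 2 p = {q | q.1 = p.1 ∧ q.2.1 = p.2.1} := by
  ext q; simp [line, coord, Fin.forall_fin_succ]

theorem mem_iff {L : Set Point} : L ∈ L3cube ↔ ∃ i p, L = line i p := by
  constructor
  · rintro (⟨a, b, rfl⟩ | ⟨a, b, rfl⟩ | ⟨a, b, rfl⟩)
    · exact ⟨0, (0, a, b), (line_zero (0, a, b)).symm⟩
    · exact ⟨1, (a, 0, b), (line_one (a, 0, b)).symm⟩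
    · exact ⟨2, (a, b, 0), (line_two (a, b, 0)).symm⟩
  · rintro ⟨i, p, rfl⟩
    fin_cases i
    · exact Or.inl ⟨_, _, line_zero p⟩
    · exact Or.inr (Or.inl ⟨_, _, line_one p⟩)
    · exact Or.inr (Or.inr ⟨_, _, line_two p⟩)

theorem adj_iff : (collGraph L3cube).Adj p q ↔ p ≠ q ∧ ∃ i, q ∈ line i p := by
  constructor
  · rintro ⟨hpq, L, hL, hp, hq⟩
    obtain ⟨i, r, rfl⟩ := mem_iff.mp hL
    exact ⟨hpq, i, fun j hj => (hq j hj).trans (hp j hj).symm⟩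
  · rintro ⟨hpq, i, hq⟩
    exact ⟨hpq, line i p, mem_iff.mpr ⟨i, p, rfl⟩, mem_line_self i p, hq⟩

theorem not_adj_of_coord_ne (hij : i ≠ j) (hi : coord i p ≠ coord i q)
    (hj : coord j p ≠ coord j q) : ¬ (collGraph L3cube).Adj p q := by
  rw [adj_iff]
  rintro ⟨-, k, hk⟩
  by_cases hki : i = k
  · exact hj (hk j (hki ▸ hij.symm)).symm
  · exact hi (hk i hki).symm

theorem mem_line_of_square (hq : q ∈ line i p) (hr : r ∈ line j p) (hs : s ∈ line j q)
    (hsr : coord j s = coord j r) : s ∈ line i r := by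
  intro k hki
  by_cases hkj : k = j
  · exact hkj ▸ hsr
  · rw [hs k hkj, hq k hki, hr k hkj]

end L3cube

open L3cube

section Embedding

variable {Q : Type*} {LQ : Set (Set Q)} {ι : Q → L3cube.Point}

theorem IsFullIsomEmb.exists_image_eq_line (emb : IsFullIsomEmb LQ L3cube ι) {L : Set Q}
    (hL : L ∈ LQ) {x : Q} (hx : x ∈ L) : ∃ i, ι '' L = line i (ι x) := by
  obtain ⟨i, p, hp⟩ := mem_iff.mp (emb.line_map L hL)
  have hxp : ι x ∈ line i p := hp ▸ Set.mem_image_of_mem ι hx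
  exact ⟨i, hp.trans (line_eq_of_mem hxp).symm⟩

/-- Otherwise the two lines contain a `2 × 2` grid `x, y, m, z` of the image, and `x, m` are
at distance `2` with the two common neighbours `y ≠ z`. -/
theorem IsFullIsomEmb.not_parallel_lines_subset_range (emb : IsFullIsomEmb LQ L3cube ι)
    (hgh : UniqueCommonNeighbor (collGraph LQ)) {i j : Fin 3} (hij : i ≠ j) {x y : Q}
    (hy : ι y ∈ line i (ι x)) (hyx : y ≠ x) (hx : line j (ι x) ⊆ Set.range ι)
    (hy' : line j (ι y) ⊆ Set.range ι) : False := by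
  obtain ⟨a, ha⟩ := exists_ne (coord j (ι x))
  obtain ⟨r, hr, hra⟩ := exists_mem_line_coord_eq j (ι x) a
  obtain ⟨s, hs, hsa⟩ := exists_mem_line_coord_eq j (ι y) a
  obtain ⟨z, rfl⟩ := hx hr
  obtain ⟨m, rfl⟩ := hy' hs
  have hyi : coord i (ι y) ≠ coord i (ι x) := coord_ne_of_mem_line hy (emb.inj.ne hyx)
  have hzi : coord i (ι z) ≠ coord i (ι y) := by rw [hr i hij]; exact hyi.symm
  have hmi : coord i (ι m) = coord i (ι y) := hs i hij
  have hmj : coord j (ι m) ≠ coord j (ι x) := hsa ▸ ha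
  have hxy : (collGraph L3cube).Adj (ι x) (ι y) :=
    adj_iff.mpr ⟨(ne_of_coord_ne hyi).symm, i, hy⟩
  have hxz : (collGraph L3cube).Adj (ι x) (ι z) :=
    adj_iff.mpr ⟨ne_of_coord_ne (hra ▸ ha).symm, j, hr⟩
  have hym : (collGraph L3cube).Adj (ι y) (ι m) :=
    adj_iff.mpr ⟨ne_of_coord_ne (hy j hij.symm ▸ hmj).symm, j, hs⟩
  have hzm : (collGraph L3cube).Adj (ι z) (ι m) :=
    adj_iff.mpr ⟨ne_of_coord_ne (hmi ▸ hzi), i,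
      mem_line_of_square hy hr hs (hsa.trans hra.symm)⟩
  have hxm : (collGraph LQ).dist x m = 2 := by
    rw [← emb.isometric]
    exact SimpleGraph.dist_eq_two_of_adj_of_adj hxy hym (ne_of_coord_ne (hmi ▸ hyi).symm)
      (not_adj_of_coord_ne hij (hmi ▸ hyi).symm hmj.symm)
  obtain ⟨c, -, huniq⟩ := hgh x m hxm
  have hyz : y = z :=
    (huniq y ⟨emb.map_adj_iff.mp hxy, emb.map_adj_iff.mp hym⟩).trans
      (huniq z ⟨emb.map_adj_iff.mp hxz, emb.map_adj_iff.mp hzm⟩).symm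
  exact hzi (hyz ▸ rfl)

theorem IsFullIsomEmb.exists_third_line_subset_range (emb : IsFullIsomEmb LQ L3cube ι)
    (hgh : UniqueCommonNeighbor (collGraph LQ)) {i j : Fin 3} (hij : i ≠ j) {x y : Q}
    {L M : Set Q} (hLi : ι '' L = line i (ι x)) (hxj : line j (ι x) ⊆ Set.range ι)
    (hy : y ∈ L) (hyx : y ≠ x) (hM : M ∈ LQ) (hyM : y ∈ M) (hML : M ≠ L) :
    ∃ k, k ≠ i ∧ k ≠ j ∧ line k (ι y) ⊆ Set.range ι := by
  obtain ⟨k, hk⟩ := emb.exists_image_eq_line hM hyM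
  have hyL : ι y ∈ line i (ι x) := hLi ▸ Set.mem_image_of_mem ι hy
  refine ⟨k, ?_, ?_, hk ▸ Set.image_subset_range ι M⟩
  · rintro rfl
    exact hML (Set.image_injective.mpr emb.inj (by rw [hk, hLi, line_eq_of_mem hyL]))
  · rintro rfl
    exact emb.not_parallel_lines_subset_range hgh hij hyL hyx hxj
      (hk ▸ Set.image_subset_range ι M)

end Embedding

/-- The near hexagon `𝕃₃ × 𝕃₃ × 𝕃₃` contains no full
isometrically embedded subgeometry that is a generalized hexagon of order
`(2,1)` (a near hexagon of order `(2,1)` in which any two points at distance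
`2` have exactly one common neighbor). -/
theorem no_H21_in_L3cube :
    ¬ ∃ (Qt : Type) (H : NearPolygon Qt 3) (ι : Qt → Fin 3 × Fin 3 × Fin 3),
        IsFullIsomEmb H.Lines L3cube ι ∧ H.hasOrder 2 1 ∧
        (∀ x y : Qt, (collGraph H.Lines).dist x y = 2 →
          ∃! z : Qt, (collGraph H.Lines).Adj x z ∧ (collGraph H.Lines).Adj z y) := by
  rintro ⟨Q, H, ι, emb, hor, hgh⟩
  obtain ⟨x, -, -⟩ := H.diam_eq
  obtain ⟨L₁, L₂, hL₁₂, hx⟩ := Set.ncard_eq_two.mp (hor.2 x)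
  have hL₁ : L₁ ∈ {L | L ∈ H.Lines ∧ x ∈ L} := by simp [hx]
  have hL₂ : L₂ ∈ {L | L ∈ H.Lines ∧ x ∈ L} := by simp [hx]
  obtain ⟨i, hi⟩ := emb.exists_image_eq_line hL₁.1 hL₁.2
  obtain ⟨j, hj⟩ := emb.exists_image_eq_line hL₂.1 hL₂.2
  have hij : i ≠ j := by
    rintro rfl
    exact hL₁₂ (Set.image_injective.mpr emb.inj (hi.trans hj.symm))
  have hxj : line j (ι x) ⊆ Set.range ι := hj ▸ Set.image_subset_range ι L₂
  obtain ⟨y₁, y₂, hy₁₂, hy⟩ := Set.ncard_eq_two.mp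
    (by rw [Set.ncard_sdiff_singleton_of_mem hL₁.2, hor.1 L₁ hL₁.1] : (L₁ \ {x}).ncard = 2)
  have hy₁ : y₁ ∈ L₁ \ {x} := by simp [hy]
  have hy₂ : y₂ ∈ L₁ \ {x} := by simp [hy]
  obtain ⟨M₁, hM₁, hy₁M₁, hM₁L₁⟩ := H.exists_line_ne hor one_pos y₁ L₁
  obtain ⟨M₂, hM₂, hy₂M₂, hM₂L₁⟩ := H.exists_line_ne hor one_pos y₂ L₁
  obtain ⟨k₁, hk₁i, hk₁j, hk₁⟩ :=
    emb.exists_third_line_subset_range hgh hij hi hxj hy₁.1 hy₁.2 hM₁ hy₁M₁ hM₁L₁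
  obtain ⟨k₂, hk₂i, hk₂j, hk₂⟩ :=
    emb.exists_third_line_subset_range hgh hij hi hxj hy₂.1 hy₂.2 hM₂ hy₂M₂ hM₂L₁
  have hy₁₂' : ι y₂ ∈ line i (ι y₁) := by
    rw [line_eq_of_mem (hi ▸ Set.mem_image_of_mem ι hy₁.1), ← hi]
    exact Set.mem_image_of_mem ι hy₂.1
  exact emb.not_parallel_lines_subset_range hgh hk₁i.symm hy₁₂' hy₁₂.symm hk₁
    (fin_three_eq_of_ne hij hk₁i hk₁j hk₂i hk₂j ▸ hk₂)
end
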